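/- For N odd and any even integer t, the involution X ↦ X Δ [1,N−1] of E_N maps E_N^{t,−} bijectively onto E_N^{−t−2,−}, where E_N^{t,−} = {X ∈ E_N : N ∈ X and γ(X) = t}. -/

import Mathlib

open scoped symmDiff

/-- γ(X) = |{i ∈ X : i even}| − |{i ∈ X : i odd}|, as an integer. -/
def gam (X : Finset ℕ) : ℤ :=
  ((X.filter (fun i => Even i)).card : ℤ) - ((X.filter (fun i => Odd i)).card : ℤ)

open Finset

/-!
Write `X = {N} ∪ Y` with `Y ⊆ I := [1, N − 1]`; then `X ∆ I = {N} ∪ (I \ Y)`. Since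
`γ(Z) = ∑_{i ∈ Z} (−1)^i` is additive, `γ(I) = 0` (as `N − 1` is even) and `N` is odd,
`γ(X) = γ(Y) − 1` becomes `−γ(Y) − 1 = −γ(X) − 2`, while `|X| = |Y| + 1` becomes
`1 + (N − 1) − |Y|`, of the same parity. Both `X ↦ X ∆ I` and `t ↦ −t − 2` are
involutions.
-/

theorem gam_eq_sum (X : Finset ℕ) : gam X = ∑ i ∈ X, (-1 : ℤ) ^ i := by
  rw [← sum_filter_add_sum_filter_not X Even]
  have hEven : ∑ i ∈ X with Even i, (-1 : ℤ) ^ i = #{i ∈ X | Even i} := by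
    rw [sum_congr rfl fun i hi => (mem_filter.mp hi).2.neg_one_pow]
    simp
  have hOdd : ∑ i ∈ X with ¬Even i, (-1 : ℤ) ^ i = -#{i ∈ X | Odd i} := by
    simp only [Nat.not_even_iff_odd]
    rw [sum_congr rfl fun i hi => (mem_filter.mp hi).2.neg_one_pow]
    simp
  rw [hEven, hOdd, gam, sub_eq_add_neg]

theorem gam_insert {a : ℕ} {X : Finset ℕ} (ha : a ∉ X) :
    gam (insert a X) = gam X + (-1) ^ a := by
  rw [gam_eq_sum, gam_eq_sum, sum_insert ha, add_comm]

theorem gam_sdiff {X Y : Finset ℕ} (h : Y ⊆ X) : gam (X \ Y) = gam X - gam Y := by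
  simp only [gam_eq_sum, sum_sdiff_eq_sub h]

theorem gam_Icc_one_two_mul (m : ℕ) : gam (Icc 1 (2 * m)) = 0 := by
  induction m with
  | zero => rfl
  | succ m ih =>
    rw [gam_eq_sum] at ih ⊢
    rw [mul_add_one, sum_Icc_succ_top (by omega), sum_Icc_succ_top (by omega), ih]
    simp [pow_succ]

theorem insert_symmDiff_eq_insert_sdiff {α : Type*} [DecidableEq α] {a : α} {Y I : Finset α}
    (ha : a ∉ I) (hY : Y ⊆ I) : insert a Y ∆ I = insert a (I \ Y) := by
  ext x
  simp only [mem_symmDiff, mem_insert, mem_sdiff]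
  have := @hY x
  grind

/-- The paper's `E_N^{t,−}`. -/
def evenSubsetsWithTop (N : ℕ) (t : ℤ) : Set (Finset ℕ) :=
  {X : Finset ℕ | X ⊆ Icc 1 N ∧ Even X.card ∧ N ∈ X ∧ gam X = t}

theorem mapsTo_symmDiff_Icc_evenSubsetsWithTop {N : ℕ} (hN : Odd N) (t : ℤ) :
    Set.MapsTo (fun X => X ∆ Icc 1 (N - 1))
      (evenSubsetsWithTop N t) (evenSubsetsWithTop N (-t - 2)) := by
  obtain ⟨m, rfl⟩ := hN
  rintro X ⟨hXsub, hXcard, hNX, rfl⟩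
  obtain ⟨Y, hNY, rfl⟩ : ∃ Y, 2 * m + 1 ∉ Y ∧ X = insert (2 * m + 1) Y :=
    ⟨X.erase _, notMem_erase _ X, (insert_erase hNX).symm⟩
  have hNI : 2 * m + 1 ∉ Icc 1 (2 * m) := by simp
  have hYI : Y ⊆ Icc 1 (2 * m) := fun y hy => by
    have := mem_Icc.mp (hXsub (mem_insert_of_mem hy))
    have := ne_of_mem_of_not_mem hy hNY
    simp only [mem_Icc]; omega
  simp only [add_tsub_cancel_right]
  rw [insert_symmDiff_eq_insert_sdiff hNI hYI]
  refine ⟨insert_subset (by simp) ((sdiff_subset).trans (Icc_subset_Icc_right (by omega))),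
    ?_, mem_insert_self _ _, ?_⟩
  · have hYcard : #Y ≤ 2 * m := by simpa using card_le_card hYI
    rw [card_insert_of_notMem hNY, Nat.even_iff] at hXcard
    rw [card_insert_of_notMem (by simp), card_sdiff_of_subset hYI, Nat.card_Icc, Nat.even_iff]
    omega
  · rw [gam_insert hNY, gam_insert (fun h => hNI (mem_sdiff.mp h).1), gam_sdiff hYI,
      gam_Icc_one_two_mul, (odd_two_mul_add_one m).neg_one_pow]
    ring

theorem stmt6_general (N : ℕ) (hN : Odd N) (t : ℤ) :
    Set.BijOn (fun X => X ∆ Finset.Icc 1 (N - 1))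
      {X : Finset ℕ | X ⊆ Finset.Icc 1 N ∧ Even X.card ∧ N ∈ X ∧ gam X = t}
      {X : Finset ℕ | X ⊆ Finset.Icc 1 N ∧ Even X.card ∧ N ∈ X ∧ gam X = -t - 2} := by
  have hinv : Set.InvOn (fun X => X ∆ Icc 1 (N - 1)) (fun X => X ∆ Icc 1 (N - 1))
      (evenSubsetsWithTop N t) (evenSubsetsWithTop N (-t - 2)) :=
    ⟨fun X _ => symmDiff_symmDiff_cancel_right _ X,
      fun X _ => symmDiff_symmDiff_cancel_right _ X⟩
  refine hinv.bijOn (mapsTo_symmDiff_Icc_evenSubsetsWithTop hN t) ?_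
  simpa using mapsTo_symmDiff_Icc_evenSubsetsWithTop hN (-t - 2)

/-- For even t, X ↦ X ∆ [1,N−1] maps E_N^{t,−} bijectively onto E_N^{−t−2,−}. -/
theorem stmt6 (N : ℕ) (hN : Odd N) (h3 : 3 ≤ N) (t : ℤ) (ht : Even t) :
    Set.BijOn (fun X => X ∆ Finset.Icc 1 (N - 1))
      {X : Finset ℕ | X ⊆ Finset.Icc 1 N ∧ Even X.card ∧ N ∈ X ∧ gam X = t}
      {X : Finset ℕ | X ⊆ Finset.Icc 1 N ∧ Even X.card ∧ N ∈ X ∧ gam X = -t - 2} :=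
  stmt6_general N hN t
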